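/- arXiv:2504.16327 — 7 statements merged into one kernel-verified Lean document; each statement's English description precedes it below -/
import Mathlib

section
/- For any integer i ≥ 1 and real numbers α, x_0, ..., x_{i-1} ∈ [0,1], if (1/i) · Σ_{k=0}^{i-1} x_k ≥ α, then Σ_{k=0}^{i-1} ((k+1)/(i(i+1))) · x_k ≥ α²/2. -/
/-!
Write `S = ∑ x_k`. Adding `x_n` to a prefix sum `S_n ≤ n` raises `S(S+1)` by
`x_n (2 S_n + x_n + 1) ≤ 2 (n+1) x_n`, so by induction `S(S+1) ≤ 2 ∑ (k+1) x_k`.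
The hypothesis gives `S ≥ α i`, and `α i (α i + 1) ≥ α² i (i+1)` because `α ≤ 1`.
-/

open Finset

theorem mul_add_one_le_two_mul_sum_succ_mul {R : Type*} [CommRing R] [LinearOrder R]
    [IsStrictOrderedRing R] (x : ℕ → R) (n : ℕ) (hx : ∀ k < n, x k ∈ Set.Icc (0 : R) 1) :
    (∑ k ∈ range n, x k) * (∑ k ∈ range n, x k + 1) ≤
      2 * ∑ k ∈ range n, ((k : R) + 1) * x k := by
  induction n with
  | zero => simp
  | succ n ih =>
    have hS : ∑ k ∈ range n, x k ≤ n := by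
      simpa using sum_le_card_nsmul (range n) x 1 fun k hk => (hx k (by simp at hk; omega)).2
    obtain ⟨hx0, hx1⟩ := hx n n.lt_succ_self
    simp only [sum_range_succ]
    nlinarith [ih fun k hk => hx k (by omega)]

/-- For any integer `i ≥ 1` and reals `α, x_0, …, x_{i-1} ∈ [0,1]`,
if `(1/i)·Σ_k x_k ≥ α` then `Σ_k ((k+1)/(i(i+1)))·x_k ≥ α²/2`. -/
theorem fractional_knapsack (i : ℕ) (hi : 1 ≤ i) (α : ℝ) (hα : α ∈ Set.Icc (0 : ℝ) 1)
    (x : ℕ → ℝ) (hx : ∀ k < i, x k ∈ Set.Icc (0 : ℝ) 1)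
    (h : α ≤ ∑ k ∈ Finset.range i, (1 / (i : ℝ)) * x k) :
    α ^ 2 / 2 ≤ ∑ k ∈ Finset.range i, ((k + 1 : ℝ) / ((i : ℝ) * ((i : ℝ) + 1))) * x k := by
  obtain ⟨hα0, hα1⟩ := hα
  have hi_pos : (0 : ℝ) < i := by exact_mod_cast hi
  set S := ∑ k ∈ range i, x k
  have hS : α * i ≤ S := by
    rwa [← mul_sum, one_div_mul_eq_div, le_div_iff₀ hi_pos] at h
  have hsq : α ^ 2 * (i * (i + 1)) ≤ S * (S + 1) := by
    nlinarith [mul_nonneg hα0 hi_pos.le]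
  simp only [div_mul_eq_mul_div, ← sum_div]
  rw [le_div_iff₀ (by positivity)]
  linarith [mul_add_one_le_two_mul_sum_succ_mul x i hx]
end

section
/- Let M be a matroid on [n] and D_A an α-uncontentious distribution for M. Then for any S ⊆ [n], the marginal distribution D_A^S (the distribution of A ∩ S where A ∼ D_A) is α-uncontentious for the restriction M_S. -/
/-- A matroid on ground set `Fin n`, given as the finite family of independent sets. -/
def IsMatroid {n : ℕ} (M : Finset (Finset (Fin n))) : Prop :=
  ∅ ∈ M ∧ (∀ X ∈ M, ∀ Y ⊆ X, Y ∈ M) ∧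
    ∀ X ∈ M, ∀ Y ∈ M, Y.card < X.card → ∃ i ∈ X \ Y, insert i Y ∈ M

/-- The rank of `X`: the maximum cardinality of an independent subset of `X`. -/
def mrank {n : ℕ} (M : Finset (Finset (Fin n))) (X : Finset (Fin n)) : ℕ :=
  (X.powerset.filter (· ∈ M)).sup Finset.card

/-- A (finitely supported) probability distribution on subsets of `Fin n`. -/
def IsDist {n : ℕ} (D : Finset (Fin n) → ℝ) : Prop :=
  (∀ A, 0 ≤ D A) ∧ ∑ A : Finset (Fin n), D A = 1

/-- `Pr_{A ∼ D}[i ∈ A]`. -/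
noncomputable def prElem {n : ℕ} (D : Finset (Fin n) → ℝ) (i : Fin n) : ℝ :=
  ∑ A : Finset (Fin n), if i ∈ A then D A else 0

/-- A contention resolution scheme: a distribution over maps `φ` with `φ A ⊆ A` and `φ A ∈ M`. -/
def IsCRS {n : ℕ} (M : Finset (Finset (Fin n)))
    (C : (Finset (Fin n) → Finset (Fin n)) → ℝ) : Prop :=
  (∀ φ, 0 ≤ C φ) ∧ (∑ φ : Finset (Fin n) → Finset (Fin n), C φ) = 1 ∧
    ∀ φ, C φ ≠ 0 → ∀ A, φ A ⊆ A ∧ φ A ∈ M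

/-- `Pr_{A ∼ D, φ ∼ C}[i ∈ φ(A) ∧ i ∈ A]`. -/
noncomputable def selProb {n : ℕ} (D : Finset (Fin n) → ℝ)
    (C : (Finset (Fin n) → Finset (Fin n)) → ℝ) (i : Fin n) : ℝ :=
  ∑ A : Finset (Fin n), ∑ φ : Finset (Fin n) → Finset (Fin n),
    if i ∈ φ A ∧ i ∈ A then D A * C φ else 0

/-- `D` is `α`-uncontentious for `M`: there is an `α`-balanced CRS, i.e. one with
`Pr[i ∈ φ(A) | i ∈ A] ≥ α` for every `i` with `Pr[i ∈ A] > 0`. -/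
def Uncontentious {n : ℕ} (α : ℝ) (M : Finset (Finset (Fin n)))
    (D : Finset (Fin n) → ℝ) : Prop :=
  ∃ C, IsCRS M C ∧ ∀ i : Fin n, 0 < prElem D i → α ≤ selProb D C i / prElem D i

/-! Given `Z = A ∩ S`, the scheme for the marginal resamples a preimage `A'` from `D` conditioned
on `A' ∩ S = Z`, runs the original scheme on `A'` and keeps what it selects inside `S`. The pair
`(A', Z)` has the same law as `(A, A ∩ S)`, so every `i ∈ S` is selected with the same probability
as before, and the selected set is independent in `M_S` because `M` is closed under subsets. -/

open Finset

section FiniteWeights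

variable {α β : Type*} [Fintype α] [DecidableEq β]

noncomputable def pushforward (f : α → β) (μ : α → ℝ) (b : β) : ℝ :=
  ∑ a, if f a = b then μ a else 0

theorem sum_pushforward_mul [Fintype β] (f : α → β) (μ : α → ℝ) (h : β → ℝ) :
    ∑ b, pushforward f μ b * h b = ∑ a, μ a * h (f a) := by
  simp only [pushforward, sum_mul, ite_mul, zero_mul]
  rw [sum_comm]
  exact sum_congr rfl fun a _ => by rw [sum_ite_eq, if_pos (mem_univ _)]

theorem sum_pushforward [Fintype β] (f : α → β) (μ : α → ℝ) :
    ∑ b, pushforward f μ b = ∑ a, μ a := by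
  simpa using sum_pushforward_mul f μ 1

theorem pushforward_nonneg {f : α → β} {μ : α → ℝ} (hμ : ∀ a, 0 ≤ μ a) (b : β) :
    0 ≤ pushforward f μ b :=
  sum_nonneg fun a _ => by split_ifs <;> simp [hμ a]

theorem exists_eq_of_pushforward_ne_zero {f : α → β} {μ : α → ℝ} {b : β}
    (h : pushforward f μ b ≠ 0) : ∃ a, f a = b ∧ μ a ≠ 0 := by
  obtain ⟨a, -, ha⟩ := exists_ne_zero_of_sum_ne_zero h
  by_cases hfa : f a = b
  · exact ⟨a, hfa, by simpa [hfa] using ha⟩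
  · simp [hfa] at ha

/-- On a null fibre the conditional distribution falls back to `μ` itself, so that
`condWeight f μ b` is a probability distribution for every `b`. -/
noncomputable def condWeight (f : α → β) (μ : α → ℝ) (b : β) (a : α) : ℝ :=
  if pushforward f μ b = 0 then μ a else if f a = b then μ a / pushforward f μ b else 0

variable {f : α → β} {μ : α → ℝ}

theorem condWeight_nonneg (hμ : ∀ a, 0 ≤ μ a) (b : β) (a : α) : 0 ≤ condWeight f μ b a := by
  unfold condWeight
  split_ifs
  exacts [hμ a, div_nonneg (hμ a) (pushforward_nonneg hμ b), le_rfl]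

theorem sum_condWeight (hμ : ∑ a, μ a = 1) (b : β) : ∑ a, condWeight f μ b a = 1 := by
  unfold condWeight
  split_ifs with h
  · exact hμ
  · rw [← div_self h, pushforward, sum_div]
    exact sum_congr rfl fun a _ => by split_ifs <;> simp

theorem pushforward_mul_condWeight (hμ : ∀ a, 0 ≤ μ a) (b : β) (a : α) :
    pushforward f μ b * condWeight f μ b a = if f a = b then μ a else 0 := by
  unfold condWeight
  split_ifs with h hfa hfa
  · rw [h, zero_mul]
    exact ((sum_eq_zero_iff_of_nonneg fun a _ => by split_ifs <;> simp [hμ a]).mp h a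
      (mem_univ a)).symm.trans (if_pos hfa)
  · rw [h, zero_mul]
  · exact mul_div_cancel₀ _ h
  · exact mul_zero _

theorem sum_sum_pushforward_mul_condWeight_mul [Fintype β] (hμ : ∀ a, 0 ≤ μ a)
    (h : β → α → ℝ) :
    ∑ b, ∑ a, pushforward f μ b * condWeight f μ b a * h b a = ∑ a, μ a * h (f a) a := by
  simp_rw [pushforward_mul_condWeight hμ, ite_mul, zero_mul]
  rw [sum_comm]
  exact sum_congr rfl fun a _ => by rw [sum_ite_eq, if_pos (mem_univ _)]

end FiniteWeights

section ProductWeights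

variable {ι κ : Type*} [Fintype ι] {w : ι → κ → ℝ}

noncomputable def prodWeight (w : ι → κ → ℝ) (g : ι → κ) : ℝ :=
  ∏ i, w i (g i)

theorem prodWeight_nonneg (hw : ∀ i k, 0 ≤ w i k) (g : ι → κ) : 0 ≤ prodWeight w g :=
  prod_nonneg fun i _ => hw i (g i)

theorem sum_prodWeight_mul_apply [DecidableEq ι] [Fintype κ] (hw : ∀ i, ∑ k, w i k = 1) (i : ι)
    (h : κ → ℝ) : ∑ g, prodWeight w g * h (g i) = ∑ k, w i k * h k := by
  have hfactor : ∀ g : ι → κ, prodWeight w g * h (g i)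
      = ∏ j, (if j = i then h (g j) else 1) * w j (g j) := fun g => by
    rw [prod_mul_distrib, prod_ite_eq', if_pos (mem_univ i), prodWeight, mul_comm]
  rw [sum_congr rfl fun g _ => hfactor g,
    ← Fintype.prod_sum fun j k => (if j = i then h k else 1) * w j k,
    prod_eq_single i fun j _ hj => by simp_rw [if_neg hj, one_mul, hw j]]
  · simp [mul_comm]
  · simp

theorem sum_prodWeight [DecidableEq ι] [Fintype κ] (hw : ∀ i, ∑ k, w i k = 1) :
    ∑ g, prodWeight w g = 1 := by
  simp only [prodWeight, ← Fintype.prod_sum, hw, prod_const_one]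

end ProductWeights

section Restriction

variable {n : ℕ}

theorem prElem_pushforward_inter (D : Finset (Fin n) → ℝ) (S : Finset (Fin n)) (i : Fin n) :
    prElem (pushforward (· ∩ S) D) i = if i ∈ S then prElem D i else 0 := by
  have h := sum_pushforward_mul (· ∩ S) D fun Z => if i ∈ Z then 1 else 0
  simp only [mul_ite, mul_one, mul_zero] at h
  rw [prElem, h, prElem]
  split_ifs with hiS <;> simp [hiS]

noncomputable def detSelProb (D : Finset (Fin n) → ℝ) (φ : Finset (Fin n) → Finset (Fin n))
    (i : Fin n) : ℝ :=
  ∑ A, if i ∈ φ A ∧ i ∈ A then D A else 0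

theorem selProb_eq_sum_mul_detSelProb (D : Finset (Fin n) → ℝ)
    (C : (Finset (Fin n) → Finset (Fin n)) → ℝ) (i : Fin n) :
    selProb D C i = ∑ φ, C φ * detSelProb D φ i := by
  simp only [selProb, detSelProb, mul_sum, mul_ite, mul_zero]
  rw [sum_comm]
  exact sum_congr rfl fun φ _ => sum_congr rfl fun A _ => by rw [mul_comm]

/-- Draw `φ ∼ C` and, independently for every `Z`, a set `A'` from `D` conditioned on
`A' ∩ S = Z`, and select `φ(A') ∩ Z ∩ S` from `Z` (the `∩ Z` matters only on null fibres). -/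
noncomputable def restrictCRS (S : Finset (Fin n)) (D : Finset (Fin n) → ℝ)
    (C : (Finset (Fin n) → Finset (Fin n)) → ℝ) : (Finset (Fin n) → Finset (Fin n)) → ℝ :=
  pushforward
    (fun p : (Finset (Fin n) → Finset (Fin n)) × (Finset (Fin n) → Finset (Fin n)) =>
      fun Z => p.1 (p.2 Z) ∩ Z ∩ S)
    fun p => C p.1 * prodWeight (condWeight (· ∩ S) D) p.2

theorem IsCRS.restrict {M : Finset (Finset (Fin n))} {C : (Finset (Fin n) → Finset (Fin n)) → ℝ}
    {D : Finset (Fin n) → ℝ} (hC : IsCRS M C) (hD : IsDist D)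
    (hdown : ∀ X ∈ M, ∀ Y ⊆ X, Y ∈ M) (S : Finset (Fin n)) :
    IsCRS (M.filter (· ⊆ S)) (restrictCRS S D C) := by
  obtain ⟨hC0, hC1, hCM⟩ := hC
  have hG0 := prodWeight_nonneg (condWeight_nonneg (f := (· ∩ S)) hD.1)
  refine ⟨pushforward_nonneg fun p => mul_nonneg (hC0 p.1) (hG0 p.2), ?_, ?_⟩
  · rw [restrictCRS, sum_pushforward, Fintype.sum_prod_type, ← sum_mul_sum, hC1,
      sum_prodWeight (sum_condWeight hD.2), mul_one]
  · intro ψ hψ A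
    obtain ⟨⟨φ, g⟩, rfl, hφg⟩ := exists_eq_of_pushforward_ne_zero hψ
    have hφ : C φ ≠ 0 := left_ne_zero_of_mul hφg
    refine ⟨inter_subset_left.trans inter_subset_right, mem_filter.mpr ⟨?_, inter_subset_right⟩⟩
    exact hdown _ (hCM φ hφ (g A)).2 _ (inter_subset_left.trans inter_subset_left)

theorem sum_prodWeight_condWeight_mul_detSelProb {D : Finset (Fin n) → ℝ} (hD : IsDist D)
    {S : Finset (Fin n)} {i : Fin n} (hiS : i ∈ S) (φ : Finset (Fin n) → Finset (Fin n)) :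
    ∑ g, prodWeight (condWeight (· ∩ S) D) g *
        detSelProb (pushforward (· ∩ S) D) (fun Z => φ (g Z) ∩ Z ∩ S) i =
      detSelProb D φ i := by
  set w := condWeight (· ∩ S) D
  set D' := pushforward (· ∩ S) D
  calc ∑ g, prodWeight w g * detSelProb D' (fun Z => φ (g Z) ∩ Z ∩ S) i
      = ∑ Z, ∑ g, prodWeight w g * if i ∈ φ (g Z) ∩ Z ∩ S ∧ i ∈ Z then D' Z else 0 := by
        simp only [detSelProb, mul_sum]
        exact sum_comm
    _ = ∑ Z, ∑ A, w Z A * if i ∈ φ A ∩ Z ∩ S ∧ i ∈ Z then D' Z else 0 :=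
        sum_congr rfl fun Z _ => sum_prodWeight_mul_apply (sum_condWeight hD.2) Z
          fun A => if i ∈ φ A ∩ Z ∩ S ∧ i ∈ Z then D' Z else 0
    _ = ∑ Z, ∑ A, D' Z * w Z A * if i ∈ φ A ∩ Z ∩ S ∧ i ∈ Z then 1 else 0 := by
        refine sum_congr rfl fun Z _ => sum_congr rfl fun A _ => ?_
        split_ifs <;> ring
    _ = ∑ A, D A * if i ∈ φ A ∩ (A ∩ S) ∩ S ∧ i ∈ A ∩ S then 1 else 0 :=
        sum_sum_pushforward_mul_condWeight_mul hD.1 _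
    _ = detSelProb D φ i := by
        refine sum_congr rfl fun A _ => ?_
        simp [hiS]

theorem selProb_restrictCRS {D : Finset (Fin n) → ℝ} (hD : IsDist D)
    (C : (Finset (Fin n) → Finset (Fin n)) → ℝ) {S : Finset (Fin n)} {i : Fin n} (hiS : i ∈ S) :
    selProb (pushforward (· ∩ S) D) (restrictCRS S D C) i = selProb D C i := by
  rw [selProb_eq_sum_mul_detSelProb, restrictCRS, sum_pushforward_mul, Fintype.sum_prod_type,
    selProb_eq_sum_mul_detSelProb]
  refine sum_congr rfl fun φ _ => ?_
  simp_rw [mul_assoc, ← mul_sum]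
  rw [sum_prodWeight_condWeight_mul_detSelProb hD hiS]

end Restriction

theorem marginal_uncontentious_general {n : ℕ} (M : Finset (Finset (Fin n))) (hM : IsMatroid M)
    (α : ℝ) (D : Finset (Fin n) → ℝ) (hD : IsDist D)
    (hu : Uncontentious α M D) (S : Finset (Fin n)) :
    Uncontentious α (M.filter fun Y => Y ⊆ S)
      (fun Z => ∑ A : Finset (Fin n), if A ∩ S = Z then D A else 0) := by
  change Uncontentious α (M.filter (· ⊆ S)) (pushforward (· ∩ S) D)
  obtain ⟨C, hC, hbalanced⟩ := hu
  refine ⟨restrictCRS S D C, hC.restrict hD hM.2.1 S, fun i hi => ?_⟩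
  rw [prElem_pushforward_inter] at hi ⊢
  have hiS : i ∈ S := by
    by_contra hiS
    simp [hiS] at hi
  rw [if_pos hiS] at hi ⊢
  rw [selProb_restrictCRS hD C hiS]
  exact hbalanced i hi

/-- If `D` is `α`-uncontentious for `M`, then for any `S`, the marginal distribution of
`A ∩ S` is `α`-uncontentious for the restriction `M_S`. -/
theorem marginal_uncontentious {n : ℕ} (M : Finset (Finset (Fin n))) (hM : IsMatroid M)
    (α : ℝ) (hα : α ∈ Set.Icc (0 : ℝ) 1) (D : Finset (Fin n) → ℝ) (hD : IsDist D)
    (hu : Uncontentious α M D) (S : Finset (Fin n)) :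
    Uncontentious α (M.filter fun Y => Y ⊆ S)
      (fun Z => ∑ A : Finset (Fin n), if A ∩ S = Z then D A else 0) :=
  marginal_uncontentious_general M hM α D hD hu S
end

section
/- Let M be a matroid on [n], α ∈ [0,1], ρ ∈ [0,α], and D_A an α-uncontentious distribution for M. Let T_ρ(A) denote the random subset of A obtained by keeping each element of A independently with probability ρ. Then there exists an element i ∈ [n] with Pr[i ∈ A] > 0 such that Pr_{A∼D_A, T_ρ}[i ∉ span_M(T_ρ(A)) | i ∈ A] ≥ α − ρ. -/
/-- The span of `X`: all elements whose insertion does not increase the rank. -/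
def spanM {n : ℕ} (M : Finset (Finset (Fin n))) (X : Finset (Fin n)) : Finset (Fin n) :=
  Finset.univ.filter fun i => mrank M (insert i X) = mrank M X

/-!
Averaging over `i`, it suffices to show `∑ᵢ Pr[i ∈ A, i ∉ span(A ∩ T)] ≥ (α - ρ) 𝔼|A|`.
A balanced CRS selects, for each `A`, an independent subset of `A` containing each `i ∈ A` with
conditional probability at least `α`, so `α 𝔼|A| ≤ 𝔼 r(A)`. On the other hand `A` is covered by
`A ∩ T`, the elements of `A` spanned by `A ∩ T`, and the unspanned ones, whence
`r(A) ≤ |A ∩ T| + #{i ∈ A | i ∉ span(A ∩ T)}`; taking expectations over `T`, with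
`𝔼|A ∩ T| = ρ|A|`, gives the claim.
-/

open Finset

section Subsampling

variable {ι : Type*} [Fintype ι] [DecidableEq ι] (ρ : ℝ)

theorem sum_ite_mem_pow_mul_pow (j : ι) :
    ∑ T : Finset ι, (if j ∈ T then ρ ^ #T * (1 - ρ) ^ (Fintype.card ι - #T) else 0) = ρ := by
  have hcard : Fintype.card ι = #(univ.erase j) + 1 := by
    rw [card_erase_add_one (mem_univ j), card_univ]
  rw [← powerset_univ, ← insert_erase (mem_univ j), sum_powerset_insert (notMem_erase j univ),
    hcard]
  have hfirst : ∀ t ∈ (univ.erase j).powerset, j ∉ t := fun t ht hj =>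
    notMem_erase j univ (mem_powerset.1 ht hj)
  rw [sum_eq_zero fun t ht => if_neg (hfirst t ht), zero_add]
  calc ∑ t ∈ (univ.erase j).powerset,
        (if j ∈ insert j t then
          ρ ^ #(insert j t) * (1 - ρ) ^ (#(univ.erase j) + 1 - #(insert j t)) else 0)
      = ∑ t ∈ (univ.erase j).powerset, ρ * (ρ ^ #t * (1 - ρ) ^ (#(univ.erase j) - #t)) := by
        refine sum_congr rfl fun t ht => ?_
        rw [if_pos (mem_insert_self j t), card_insert_of_notMem (hfirst t ht), pow_succ,
          Nat.add_sub_add_right]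
        ring
    _ = ρ := by rw [← mul_sum, sum_pow_mul_eq_add_pow, add_sub_cancel, one_pow, mul_one]

theorem sum_pow_mul_pow_mul_card_inter (A : Finset ι) :
    ∑ T : Finset ι, ρ ^ #T * (1 - ρ) ^ (Fintype.card ι - #T) * #(A ∩ T) = ρ * #A := by
  calc ∑ T : Finset ι, ρ ^ #T * (1 - ρ) ^ (Fintype.card ι - #T) * #(A ∩ T)
      = ∑ T : Finset ι, ∑ j ∈ A,
          (if j ∈ T then ρ ^ #T * (1 - ρ) ^ (Fintype.card ι - #T) else 0) := by
        refine sum_congr rfl fun T _ => ?_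
        rw [← filter_mem_eq_inter, card_filter, Nat.cast_sum, mul_sum]
        refine sum_congr rfl fun j _ => ?_
        split_ifs <;> simp
    _ = ρ * #A := by rw [sum_comm]; simp [sum_ite_mem_pow_mul_pow, mul_comm]

end Subsampling

section Rank

variable {n : ℕ} {M : Finset (Finset (Fin n))}

theorem card_le_mrank {B X : Finset (Fin n)} (hB : B ∈ M) (hBX : B ⊆ X) : #B ≤ mrank M X :=
  le_sup (mem_filter.2 ⟨mem_powerset.2 hBX, hB⟩)

theorem mrank_mono {X Y : Finset (Fin n)} (h : X ⊆ Y) : mrank M X ≤ mrank M Y :=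
  sup_mono (filter_subset_filter _ (powerset_mono.2 h))

theorem mrank_le_card (X : Finset (Fin n)) : mrank M X ≤ #X :=
  Finset.sup_le fun _ hB => card_le_card (mem_powerset.1 (mem_filter.1 hB).1)

namespace IsMatroid

theorem exists_card_eq_mrank (hM : IsMatroid M) (X : Finset (Fin n)) :
    ∃ B ⊆ X, B ∈ M ∧ #B = mrank M X := by
  obtain ⟨B, hB, hcard⟩ :=
    exists_mem_eq_sup _ ⟨∅, mem_filter.2 ⟨empty_mem_powerset X, hM.1⟩⟩ card
  rw [mem_filter, mem_powerset] at hB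
  exact ⟨B, hB.1, hB.2, hcard.symm⟩

theorem mrank_union_le (hM : IsMatroid M) (X S : Finset (Fin n)) :
    mrank M (X ∪ S) ≤ mrank M X + #S := by
  obtain ⟨B, hBsub, hBM, hBcard⟩ := hM.exists_card_eq_mrank (X ∪ S)
  have hX : #(B ∩ X) ≤ mrank M X :=
    card_le_mrank (hM.2.1 B hBM _ inter_subset_left) inter_subset_right
  have hS : #(B \ X) ≤ #S := card_le_card fun i hi => by
    have := mem_sdiff.1 hi
    exact (mem_union.1 (hBsub this.1)).resolve_left this.2
  rw [← hBcard, ← card_inter_add_card_sdiff B X]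
  omega

theorem mrank_union_of_subset_spanM (hM : IsMatroid M) {X Y : Finset (Fin n)}
    (hY : Y ⊆ spanM M X) : mrank M (X ∪ Y) = mrank M X := by
  refine le_antisymm ?_ (mrank_mono subset_union_left)
  obtain ⟨B, hBsub, hBM, hBcard⟩ := hM.exists_card_eq_mrank (X ∪ Y)
  obtain ⟨B₀, hB₀sub, hB₀M, hB₀card⟩ := hM.exists_card_eq_mrank X
  rw [← hBcard, ← hB₀card]
  by_contra! hlt
  -- the element augmenting `B₀` lies in `X` or in `Y ⊆ span X`; either way the rank of `X` grows
  obtain ⟨i, hi, hins⟩ := hM.2.2 B hBM B₀ hB₀M hlt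
  rw [mem_sdiff] at hi
  have hcard : #(insert i B₀) = #B₀ + 1 := card_insert_of_notMem hi.2
  rcases mem_union.1 (hBsub hi.1) with hiX | hiY
  · have := card_le_mrank hins (insert_subset hiX hB₀sub)
    omega
  · have := card_le_mrank hins (insert_subset_insert i hB₀sub)
    rw [(mem_filter.1 (hY hiY)).2] at this
    omega

theorem mrank_le_card_add_card_filter_notMem_spanM (hM : IsMatroid M) (A X : Finset (Fin n)) :
    mrank M A ≤ #X + #{i ∈ A | i ∉ spanM M X} := by
  have hA : A ⊆ (X ∪ {i ∈ A | i ∈ spanM M X}) ∪ {i ∈ A | i ∉ spanM M X} := fun i hi => by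
    by_cases h : i ∈ spanM M X <;> simp [hi, h]
  calc mrank M A
      ≤ mrank M (X ∪ {i ∈ A | i ∈ spanM M X}) + #{i ∈ A | i ∉ spanM M X} :=
        (mrank_mono hA).trans (hM.mrank_union_le _ _)
    _ = mrank M X + #{i ∈ A | i ∉ spanM M X} := by
        rw [hM.mrank_union_of_subset_spanM fun i hi => (mem_filter.1 hi).2]
    _ ≤ #X + #{i ∈ A | i ∉ spanM M X} := Nat.add_le_add_right (mrank_le_card X) _

end IsMatroid

end Rank

section Distribution

variable {n : ℕ} {M : Finset (Finset (Fin n))} {D : Finset (Fin n) → ℝ}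

theorem sum_prElem : ∑ i, prElem D i = ∑ A, D A * #A := by
  simp only [prElem]
  rw [sum_comm]
  refine sum_congr rfl fun A _ => ?_
  rw [← sum_filter, sum_const, filter_mem_eq_inter, univ_inter, nsmul_eq_mul, mul_comm]

theorem IsMatroid.sum_selProb_le (hM : IsMatroid M) (hD : ∀ A, 0 ≤ D A)
    {C : (Finset (Fin n) → Finset (Fin n)) → ℝ} (hC : IsCRS M C) :
    ∑ i, selProb D C i ≤ ∑ A, D A * mrank M A := by
  have hsel : ∀ A φ, ∑ i, (if i ∈ φ A ∧ i ∈ A then D A * C φ else 0)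
      = #(φ A ∩ A) * (D A * C φ) := fun A φ => by
    rw [← sum_filter, sum_const, nsmul_eq_mul]
    simp only [← mem_inter, filter_mem_eq_inter, univ_inter]
  have hcard : ∀ A φ, (#(φ A ∩ A) : ℝ) * (D A * C φ) ≤ mrank M A * (D A * C φ) := fun A φ => by
    by_cases hφ : C φ = 0
    · simp [hφ]
    · refine mul_le_mul_of_nonneg_right ?_ (mul_nonneg (hD A) (hC.1 φ))
      exact_mod_cast card_le_mrank (hM.2.1 _ (hC.2.2 φ hφ A).2 _ inter_subset_left)
        inter_subset_right
  calc ∑ i, selProb D C i = ∑ A, ∑ φ, (#(φ A ∩ A) : ℝ) * (D A * C φ) := by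
        simp only [selProb]
        rw [sum_comm]
        exact sum_congr rfl fun A _ => by rw [sum_comm]; exact sum_congr rfl fun φ _ => hsel A φ
    _ ≤ ∑ A, ∑ φ, (mrank M A : ℝ) * (D A * C φ) :=
        sum_le_sum fun A _ => sum_le_sum fun φ _ => hcard A φ
    _ = ∑ A, D A * mrank M A := sum_congr rfl fun A _ => by
        rw [← mul_sum, ← mul_sum, hC.2.1, mul_one, mul_comm]

theorem Uncontentious.mul_sum_card_le_sum_mrank {α : ℝ} (hu : Uncontentious α M D)
    (hM : IsMatroid M) (hD : ∀ A, 0 ≤ D A) (hpos : ∀ i, 0 < prElem D i) :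
    α * ∑ A, D A * #A ≤ ∑ A, D A * mrank M A := by
  obtain ⟨C, hC, hbal⟩ := hu
  calc α * ∑ A, D A * #A = ∑ i, α * prElem D i := by rw [← sum_prElem, mul_sum]
    _ ≤ ∑ i, selProb D C i := sum_le_sum fun i _ => (le_div_iff₀ (hpos i)).1 (hbal i (hpos i))
    _ ≤ ∑ A, D A * mrank M A := hM.sum_selProb_le hD hC

variable (M D) in
def unspannedProb (ρ : ℝ) (i : Fin n) : ℝ :=
  ∑ T, ∑ A, if i ∈ A ∧ i ∉ spanM M (A ∩ T) then ρ ^ #T * (1 - ρ) ^ (n - #T) * D A else 0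

theorem sum_unspannedProb (ρ : ℝ) :
    ∑ i, unspannedProb M D ρ i
      = ∑ T, ∑ A, ρ ^ #T * (1 - ρ) ^ (n - #T) * D A * #{i ∈ A | i ∉ spanM M (A ∩ T)} := by
  simp only [unspannedProb]
  rw [sum_comm]
  refine sum_congr rfl fun T _ => ?_
  rw [sum_comm]
  refine sum_congr rfl fun A _ => ?_
  rw [← sum_filter, sum_const, nsmul_eq_mul, mul_comm]
  congr 3
  ext i
  simp

theorem IsMatroid.sum_mrank_sub_le_sum_unspannedProb (hM : IsMatroid M) (hD : ∀ A, 0 ≤ D A)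
    {ρ : ℝ} (hρ₀ : 0 ≤ ρ) (hρ₁ : ρ ≤ 1) :
    ∑ A, D A * mrank M A - ρ * ∑ A, D A * #A ≤ ∑ i, unspannedProb M D ρ i := by
  have hexp : ∀ A : Finset (Fin n), ∑ T, ρ ^ #T * (1 - ρ) ^ (n - #T) * (mrank M A - #(A ∩ T))
      = mrank M A - ρ * #A := fun A => by
    have h₁ := Fin.sum_pow_mul_eq_add_pow (n := n) ρ (1 - ρ)
    have h₂ := sum_pow_mul_pow_mul_card_inter ρ A
    rw [add_sub_cancel, one_pow] at h₁
    rw [Fintype.card_fin] at h₂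
    simp only [mul_sub, sum_sub_distrib, ← sum_mul, h₁, h₂, one_mul]
  calc ∑ A, D A * mrank M A - ρ * ∑ A, D A * #A
      = ∑ A, ∑ T, ρ ^ #T * (1 - ρ) ^ (n - #T) * D A * (mrank M A - #(A ∩ T)) := by
        rw [mul_sum, ← sum_sub_distrib]
        refine sum_congr rfl fun A _ => ?_
        rw [mul_left_comm ρ, ← mul_sub, ← hexp A, mul_sum]
        exact sum_congr rfl fun T _ => by ring
    _ ≤ ∑ A, ∑ T, ρ ^ #T * (1 - ρ) ^ (n - #T) * D A * #{i ∈ A | i ∉ spanM M (A ∩ T)} := by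
        gcongr with A _ T _
        · exact mul_nonneg (mul_nonneg (pow_nonneg hρ₀ _) (pow_nonneg (sub_nonneg.2 hρ₁) _)) (hD A)
        · have := hM.mrank_le_card_add_card_filter_notMem_spanM A (A ∩ T)
          rw [sub_le_iff_le_add']
          exact_mod_cast this
    _ = ∑ i, unspannedProb M D ρ i := by rw [sum_unspannedProb, sum_comm]

end Distribution

/-- The subsample `T_ρ(A)` is realized as `A ∩ T`, with `T` a `ρ`-biased random subset of the
ground set drawn independently of `A`. -/
theorem exists_unspanned_after_subsampling {n : ℕ} (hn : 0 < n)
    (M : Finset (Finset (Fin n))) (hM : IsMatroid M)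
    (α ρ : ℝ) (hα : α ∈ Set.Icc (0 : ℝ) 1) (hρ : ρ ∈ Set.Icc (0 : ℝ) α)
    (D : Finset (Fin n) → ℝ) (hD : IsDist D) (hu : Uncontentious α M D)
    (hpos : ∀ i : Fin n, 0 < prElem D i) :
    ∃ i : Fin n, 0 < prElem D i ∧
      α - ρ ≤
        (∑ T : Finset (Fin n), ∑ A : Finset (Fin n),
            if i ∈ A ∧ i ∉ spanM M (A ∩ T) then
              ρ ^ T.card * (1 - ρ) ^ (n - T.card) * D A
            else 0) / prElem D i := by
  have hsum : ∑ i, (α - ρ) * prElem D i ≤ ∑ i, unspannedProb M D ρ i := by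
    have hrank := hu.mul_sum_card_le_sum_mrank hM hD.1 hpos
    have hunspanned := hM.sum_mrank_sub_le_sum_unspannedProb hD.1 hρ.1 (hρ.2.trans hα.2)
    rw [← mul_sum, sum_prElem]
    linarith
  obtain ⟨i, -, hi⟩ := exists_le_of_sum_le (univ_nonempty_iff.2 ⟨⟨0, hn⟩⟩) hsum
  exact ⟨i, hpos i, (le_div_iff₀ (hpos i)).2 hi⟩
end

section
/- Fix a permutation π of [n]. Sample a uniformly random permutation σ' of [n+1] and let T = prefix(σ', n+1), the set of elements of [n+1] appearing before n+1 in σ'. Then for every i ∈ [n], the random set π^{i-1} ∩ T (where π^{i-1} := {π(1),...,π(i-1)}) has the same distribution as prefix(σ, π(i)) for σ a uniformly random permutation of π^i := {π(1),...,π(i)}. -/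
/-- The set of elements arriving strictly before `e` in the arrival order `σ`
(where `σ j` is the `j`-th arriving element). -/
def prefixSet {m : ℕ} (σ : Equiv.Perm (Fin m)) (e : Fin m) : Finset (Fin m) :=
  Finset.univ.filter fun x => σ.symm x < σ.symm e

/-- `prevSet π i = {π j | j < i}`, the elements preceding `π i` in the order `π`. -/
def prevSet {n : ℕ} (π : Equiv.Perm (Fin n)) (i : Fin n) : Finset (Fin n) :=
  (Finset.univ.filter fun j => j < i).image π

/-- The elements of a list `l` appearing strictly before `e`, as a finset. -/
def listPrefix {α : Type*} [DecidableEq α] (l : List α) (e : α) : Finset α :=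
  (l.takeWhile (· ≠ e)).toFinset

/-- Restrict a subset of `Fin (n+1)` to a subset of `Fin n` (dropping the last element). -/
def downSet {n : ℕ} (T : Finset (Fin (n + 1))) : Finset (Fin n) :=
  Finset.univ.filter fun x : Fin n => x.castSucc ∈ T

/-!
The order in which a uniformly random permutation of `Fin m` lists the elements of a fixed set `A`
is a uniformly random ordering of `A`: the permutations of `Fin m` preserving `A` permute the
fibres of this map transitively, so all `(#A)!` fibres have the same size.
Identify `π i` with `n + 1`: the elements of `π^{i-1}` arriving before `n + 1` under `σ'` are then
exactly the prefix of `π i` in the induced ordering of `π^i`.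
-/

open Finset

theorem List.Perm.exists_perm_map_eq {α : Type*} [DecidableEq α] {l₁ l₂ : List α}
    (h : l₁.Perm l₂) (hl₁ : l₁.Nodup) :
    ∃ τ : Equiv.Perm α, l₁.map τ = l₂ ∧ ∀ x ∉ l₁, τ x = x := by
  induction h with
  | nil => exact ⟨1, rfl, fun _ _ => rfl⟩
  | cons x _ ih =>
    obtain ⟨hx, hl⟩ := List.nodup_cons.1 hl₁
    obtain ⟨τ, hmap, hfix⟩ := ih hl
    refine ⟨τ, by simp [hfix x hx, hmap], fun z hz => hfix z (List.not_mem_of_not_mem_cons hz)⟩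
  | swap x y l =>
    simp only [List.nodup_cons, List.mem_cons, not_or] at hl₁
    obtain ⟨⟨hyx, hy⟩, hx, -⟩ := hl₁
    refine ⟨Equiv.swap x y, ?_, fun z hz => ?_⟩
    · simp only [List.map_cons, Equiv.swap_apply_left, Equiv.swap_apply_right, List.cons.injEq,
        true_and]
      refine (List.map_congr_left fun z hz => ?_).trans (List.map_id l)
      exact Equiv.swap_apply_of_ne_of_ne (ne_of_mem_of_not_mem hz hx) (ne_of_mem_of_not_mem hz hy)
    · simp only [List.mem_cons, not_or] at hz
      exact Equiv.swap_apply_of_ne_of_ne hz.2.1 hz.1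
  | trans h₁₂ _ ih₁₂ ih₂₃ =>
    obtain ⟨τ₁, hmap₁, hfix₁⟩ := ih₁₂ hl₁
    obtain ⟨τ₂, hmap₂, hfix₂⟩ := ih₂₃ (h₁₂.nodup_iff.1 hl₁)
    refine ⟨τ₁.trans τ₂, by simp [← List.map_map, hmap₁, hmap₂], fun z hz => ?_⟩
    simp [hfix₁ z hz, hfix₂ z (h₁₂.mem_iff.not.1 hz)]

theorem listPrefix_map {α β : Type*} [DecidableEq α] [DecidableEq β] (f : α ↪ β) (l : List α)
    (e : α) : listPrefix (l.map f) (f e) = (listPrefix l e).map f := by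
  ext
  simp [listPrefix, List.takeWhile_map, Function.comp_def]

theorem card_filter_permutations_map {α β : Type*} [DecidableEq α] [DecidableEq β] (f : α ↪ β)
    (A : Finset α) (Q : List β → Prop) [DecidablePred Q] :
    #{L ∈ (A.map f).toList.permutations.toFinset | Q L} =
      #{l ∈ A.toList.permutations.toFinset | Q (l.map f)} := by
  have hperm : (A.map f).toList.Perm (A.toList.map f) :=
    List.perm_of_nodup_nodup_toFinset_eq (Finset.nodup_toList _)
      ((Finset.nodup_toList _).map f.injective) (by ext; simp)
  have hL : (A.map f).toList.permutations.toFinset =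
      A.toList.permutations.toFinset.map ⟨List.map f, List.map_injective_iff.2 f.injective⟩ := by
    rw [List.toFinset_eq_of_perm _ _ hperm.permutations, ← List.map_permutations]
    ext; simp
  rw [hL, Finset.filter_map, Finset.card_map]
  rfl

section InducedOrder

variable {m : ℕ} (A : Finset (Fin m))

def inducedOrder (σ : Equiv.Perm (Fin m)) : List (Fin m) :=
  (List.ofFn σ).filter (· ∈ A)

theorem inducedOrder_perm_toList (σ : Equiv.Perm (Fin m)) : (inducedOrder A σ).Perm A.toList :=
  List.perm_of_nodup_nodup_toFinset_eq ((List.nodup_ofFn.2 σ.injective).filter _)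
    (Finset.nodup_toList A) (by ext x; simp [inducedOrder, List.mem_ofFn, σ.surjective x])

theorem inducedOrder_trans {τ : Equiv.Perm (Fin m)} (hτ : ∀ x, τ x ∈ A ↔ x ∈ A)
    (σ : Equiv.Perm (Fin m)) : inducedOrder A (σ.trans τ) = (inducedOrder A σ).map τ := by
  simp only [inducedOrder, Equiv.coe_trans, ← List.map_ofFn, List.filter_map]
  congr 2
  ext x
  simp [hτ]

theorem mem_takeWhile_ofFn_ne (σ : Equiv.Perm (Fin m)) (e x : Fin m) :
    x ∈ (List.ofFn σ).takeWhile (· ≠ e) ↔ σ.symm x < σ.symm e := by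
  rw [List.takeWhile_eq_take_findIdx_not, List.mem_take_iff_getElem]
  have hidx : (List.ofFn σ).findIdx (fun a => !decide (a ≠ e)) = σ.symm e := by
    rw [List.findIdx_eq (by simp)]
    simpa [Fin.ext_iff, ← Equiv.eq_symm_apply] using fun j hj => hj.ne
  rw [hidx]
  simp only [List.length_ofFn, Fin.is_le', min_eq_left, List.getElem_ofFn]
  constructor
  · rintro ⟨j, hj, rfl⟩
    simpa [Fin.lt_def] using hj
  · exact fun hx => ⟨σ.symm x, hx, by simp⟩

theorem listPrefix_inducedOrder {e : Fin m} (he : e ∈ A) (σ : Equiv.Perm (Fin m)) :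
    listPrefix (inducedOrder A σ) e = A ∩ prefixSet σ e := by
  have hfilter : (fun a => !decide (a ∈ A) || decide (a ≠ e)) = fun a => decide (a ≠ e) := by
    ext a; by_cases ha : a = e <;> simp [ha, he]
  ext x
  rw [listPrefix, inducedOrder, List.takeWhile_filter, hfilter]
  simp only [List.mem_toFinset, List.mem_filter, mem_takeWhile_ofFn_ne]
  simp [prefixSet, and_comm]

theorem card_inducedOrder_fiber_le {l₁ l₂ : List (Fin m)} (h₁ : l₁.Perm A.toList)
    (h₂ : l₂.Perm A.toList) :
    #{σ | inducedOrder A σ = l₁} ≤ #{σ | inducedOrder A σ = l₂} := by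
  obtain ⟨τ, hmap, hfix⟩ :=
    (h₁.trans h₂.symm).exists_perm_map_eq (h₁.nodup_iff.2 A.nodup_toList)
  have hτ : ∀ x, τ x ∈ A ↔ x ∈ A := by
    intro x
    by_cases hx : x ∈ l₁
    · have hτx : τ x ∈ l₂ := hmap ▸ List.mem_map_of_mem hx
      exact iff_of_true (mem_toList.1 (h₂.subset hτx)) (mem_toList.1 (h₁.subset hx))
    · rw [hfix x hx]
  refine card_le_card_of_injOn (fun σ => σ.trans τ) (fun σ hσ => ?_) (fun σ _ σ' _ h => ?_)
  · simp only [coe_filter, mem_univ, true_and, Set.mem_ofPred_eq] at hσ ⊢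
    rw [inducedOrder_trans A hτ, hσ, hmap]
  · exact Equiv.ext fun x => τ.injective (Equiv.congr_fun h x)

theorem card_inducedOrder_fiber_eq {l₁ l₂ : List (Fin m)} (h₁ : l₁.Perm A.toList)
    (h₂ : l₂.Perm A.toList) :
    #{σ | inducedOrder A σ = l₁} = #{σ | inducedOrder A σ = l₂} :=
  le_antisymm (card_inducedOrder_fiber_le A h₁ h₂) (card_inducedOrder_fiber_le A h₂ h₁)

theorem card_filter_inducedOrder (Q : List (Fin m) → Prop) [DecidablePred Q] :
    #{σ | Q (inducedOrder A σ)} =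
      #{l ∈ A.toList.permutations.toFinset | Q l} * #{σ | inducedOrder A σ = A.toList} := by
  rw [card_eq_sum_card_fiberwise (f := inducedOrder A)
    (t := {l ∈ A.toList.permutations.toFinset | Q l})]
  · refine sum_const_nat fun l hl => ?_
    simp only [mem_filter, List.mem_toFinset, List.mem_permutations] at hl
    rw [filter_filter, ← card_inducedOrder_fiber_eq A hl.1 (List.Perm.refl _)]
    congr 1
    ext σ
    simp only [mem_filter, mem_univ, true_and, and_iff_right_iff_imp]
    rintro rfl
    exact hl.2
  · intro σ hσ
    simp only [coe_filter, mem_univ, true_and, Set.mem_ofPred_eq] at hσ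
    simp [hσ, inducedOrder_perm_toList]

theorem card_filter_inducedOrder_div_factorial (Q : List (Fin m) → Prop) [DecidablePred Q] :
    (#{σ | Q (inducedOrder A σ)} : ℝ) / m.factorial =
      #{l ∈ A.toList.permutations.toFinset | Q l} / (#A).factorial := by
  have htotal := card_filter_inducedOrder A (fun _ => True)
  simp only [filter_true, card_univ, Fintype.card_perm, Fintype.card_fin,
    List.toFinset_card_of_nodup (List.nodup_permutations _ A.nodup_toList),
    List.length_permutations, length_toList] at htotal
  have hfiber : #{σ | inducedOrder A σ = A.toList} ≠ 0 := by
    rintro h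
    simp [h, Nat.factorial_ne_zero] at htotal
  rw [card_filter_inducedOrder A Q, htotal]
  push_cast
  field_simp

end InducedOrder

/-- With `T` the prefix before element `n+1` in a uniformly random permutation of `[n+1]`,
for each `i`, the random set `π^{i-1} ∩ T` has the same distribution as `prefix(σ, π(i))`
for `σ` a uniformly random ordering of `π^i` (here realized as a uniformly random list
enumerating `π^i`). -/
theorem prefix_distribution_eq {n : ℕ} (π : Equiv.Perm (Fin n)) (i : Fin n)
    (S : Finset (Fin n)) :
    ((Finset.univ.filter fun σ' : Equiv.Perm (Fin (n + 1)) =>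
          prevSet π i ∩ downSet (prefixSet σ' (Fin.last n)) = S).card : ℝ) /
        (Nat.factorial (n + 1) : ℝ) =
      (((insert (π i) (prevSet π i)).toList.permutations.toFinset.filter
          (fun l => listPrefix l (π i) = S)).card : ℝ) /
        (Nat.factorial (i.val + 1) : ℝ) := by
  set e := π i
  set P := prevSet π i
  have he : e ∉ P := by
    simp only [e, P, prevSet, mem_image, mem_filter, mem_univ, true_and, not_exists, not_and]
    exact fun j hj hje => hj.ne (π.injective hje)
  have hcard : #(insert e P) = i + 1 := by
    rw [card_insert_of_notMem he]
    simp [P, prevSet, card_image_of_injective _ π.injective, filter_gt_eq_Iio]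
  let f : Fin n ↪ Fin (n + 1) :=
    Fin.castSuccEmb.trans (Equiv.swap e.castSucc (Fin.last n)).toEmbedding
  have hfe : f e = Fin.last n := by simp [f]
  have hf : ∀ x ≠ e, f x = x.castSucc := fun x hx =>
    Equiv.swap_apply_of_ne_of_ne (by simpa using hx) (Fin.castSucc_lt_last x).ne
  let B := (insert e P).map f
  have hprefix : ∀ σ', P ∩ downSet (prefixSet σ' (Fin.last n)) =
      (listPrefix (inducedOrder B σ') (Fin.last n)).preimage f f.injective.injOn := by
    intro σ'
    rw [listPrefix_inducedOrder B (by simp [B, ← hfe]) σ']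
    ext x
    simp only [mem_inter, mem_preimage, downSet, mem_filter, mem_univ, true_and, B, mem_map',
      mem_insert]
    by_cases hx : x = e
    · subst hx; simp [he, hfe, prefixSet]
    · simp [hx, hf x hx]
  simp_rw [hprefix]
  rw [card_filter_inducedOrder_div_factorial B
      (fun L => (listPrefix L (Fin.last n)).preimage f f.injective.injOn = S),
    card_map, hcard, card_filter_permutations_map]
  simp_rw [← hfe, listPrefix_map, preimage_map]
end

section
/- Fix a permutation π of [n]. Sample a uniformly random permutation σ' of [n+1] and let T = prefix(σ', n+1). Then for every i ∈ [n] and every S ⊆ {π(1),...,π(i-1)}, the conditional probability Pr[π(i) ∈ T | {π(1),...,π(i-1)} ∩ T = S] = (|S| + 1)/(i + 1). -/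
/-! For disjoint `B`, `C` and `e ∉ B ∪ C`, the permutations of an `N`-element linear order
placing `B` before `e` and `e` before `C` number `N! |B|! |C|! / (|B| + |C| + 1)!`.
For `B = ∅` this says that each element of `{e} ∪ C` is equally likely to come first, which a
transposition relabelling shows; inserting an element `x` into `B` then follows by splitting
the permutations according to whether `x` comes before or after `e`.
The conditioning event `π^{i-1} ∩ T = S` puts `S` before `n + 1` and `π^{i-1} \ S` after it, and
`π(i) ∈ T` moves `π(i)` into the first group, so the ratio of the two counts is
`(|S| + 1) / (|π^{i-1}| + 2)`. -/

open Finset Equiv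
open scoped Nat

lemma Finset.map_swap_erase {α : Type*} [DecidableEq α] {A : Finset α} {y e : α} (hy : y ∈ A)
    (he : e ∈ A) :
    (A.erase y).map (swap y e).toEmbedding = A.erase e := by
  ext z
  rw [mem_map_equiv, symm_swap]
  rcases eq_or_ne z e with rfl | hze
  · simp
  rcases eq_or_ne z y with rfl | hzy
  · simp [hze, hze.symm, hy, he]
  · simp [swap_apply_of_ne_of_ne hzy hze, hzy, hze]

section BeforeAfter

variable {α : Type*} [Fintype α] [LinearOrder α]

def beforeAfter (B : Finset α) (e : α) (C : Finset α) : Finset (Perm α) :=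
  univ.filter fun σ => (∀ x ∈ B, σ.symm x < σ.symm e) ∧ ∀ x ∈ C, σ.symm e < σ.symm x

@[simp]
lemma mem_beforeAfter {B C : Finset α} {e : α} {σ : Perm α} :
    σ ∈ beforeAfter B e C ↔
      (∀ x ∈ B, σ.symm x < σ.symm e) ∧ ∀ x ∈ C, σ.symm e < σ.symm x := by
  simp [beforeAfter]

lemma card_beforeAfter_map (g : Perm α) (B : Finset α) (e : α) (C : Finset α) :
    #(beforeAfter (B.map g.toEmbedding) (g e) (C.map g.toEmbedding)) =
      #(beforeAfter B e C) := by
  refine card_nbij' (g⁻¹ * ·) (g * ·) ?_ ?_ ?_ ?_ <;> intro σ hσ <;>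
    simp_all [Perm.mul_def, Perm.inv_def, trans_assoc]

lemma filter_beforeAfter_lt (B : Finset α) (e : α) (C : Finset α) (x : α) :
    (beforeAfter B e C).filter (fun σ => σ.symm x < σ.symm e) =
      beforeAfter (insert x B) e C := by
  ext σ
  simp only [mem_filter, mem_beforeAfter, forall_mem_insert]
  tauto

lemma filter_beforeAfter_not_lt (B : Finset α) {e : α} (C : Finset α) {x : α} (hxe : x ≠ e) :
    (beforeAfter B e C).filter (fun σ => ¬ σ.symm x < σ.symm e) =
      beforeAfter B e (insert x C) := by
  ext σ
  have hne : σ.symm e ≠ σ.symm x := fun h => hxe (σ.symm.injective h).symm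
  simp only [mem_filter, mem_beforeAfter, forall_mem_insert, not_lt, hne.le_iff_lt]
  tauto

lemma card_beforeAfter_eq_add (B : Finset α) {e : α} (C : Finset α) {x : α} (hxe : x ≠ e) :
    #(beforeAfter B e C) =
      #(beforeAfter (insert x B) e C) + #(beforeAfter B e (insert x C)) := by
  rw [← filter_beforeAfter_lt, ← filter_beforeAfter_not_lt B C hxe,
    card_filter_add_card_filter_not]

lemma card_beforeAfter_empty_mul {e : α} {C : Finset α} (heC : e ∉ C) :
    #(beforeAfter ∅ e C) * (#C + 1) = (Fintype.card α)! := by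
  set A := insert e C
  have hcard : ∀ y ∈ A, #(beforeAfter ∅ y (A.erase y)) = #(beforeAfter ∅ e C) := by
    intro y hy
    rw [← card_beforeAfter_map (swap y e), map_swap_erase hy (mem_insert_self e C),
      erase_insert heC, swap_apply_left, map_empty]
  have hdisj : (A : Set α).PairwiseDisjoint fun y => beforeAfter ∅ y (A.erase y) := by
    intro y hy z hz hyz
    refine disjoint_left.2 fun σ hσy hσz => ?_
    simp only [mem_beforeAfter] at hσy hσz
    exact (hσy.2 z (mem_erase.2 ⟨hyz.symm, hz⟩)).asymm (hσz.2 y (mem_erase.2 ⟨hyz, hy⟩))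
  have hcover : A.biUnion (fun y => beforeAfter ∅ y (A.erase y)) = univ := by
    refine eq_univ_of_forall fun σ => ?_
    obtain ⟨y, hy, hmin⟩ := A.exists_min_image σ.symm (insert_nonempty e C)
    refine mem_biUnion.2 ⟨y, hy, ?_⟩
    simp only [mem_beforeAfter, notMem_empty, mem_erase]
    exact ⟨fun _ h => h.elim, fun z ⟨hzy, hz⟩ =>
      (hmin z hz).lt_of_ne fun h => hzy (σ.symm.injective h).symm⟩
  calc #(beforeAfter ∅ e C) * (#C + 1)
      = ∑ y ∈ A, #(beforeAfter ∅ y (A.erase y)) := by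
        rw [sum_congr rfl hcard, sum_const, card_insert_of_notMem heC, smul_eq_mul, mul_comm]
    _ = (Fintype.card α)! := by
        rw [← card_biUnion hdisj, hcover, card_univ, Fintype.card_perm]

theorem card_beforeAfter_mul_factorial {B C : Finset α} {e : α} (hBC : Disjoint B C)
    (heB : e ∉ B) (heC : e ∉ C) :
    #(beforeAfter B e C) * (#B + #C + 1)! = (Fintype.card α)! * (#B)! * (#C)! := by
  induction B using Finset.induction_on generalizing C with
  | empty =>
    rw [card_empty, zero_add, Nat.factorial_succ, ← card_beforeAfter_empty_mul heC]
    ring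
  | insert x B hxB ih =>
    obtain ⟨hxC, hBC⟩ := disjoint_insert_left.1 hBC
    obtain ⟨hxe, heB⟩ := not_or.1 (mem_insert.not.1 heB)
    have hB := ih hBC heB heC
    have hBx := ih (disjoint_insert_right.2 ⟨hxB, hBC⟩) heB
      (mem_insert.not.2 (not_or.2 ⟨hxe, heC⟩))
    rw [card_beforeAfter_eq_add B C (Ne.symm hxe)] at hB
    rw [card_insert_of_notMem hxC] at hBx
    rw [card_insert_of_notMem hxB]
    simp only [Nat.factorial_succ, show #B + (#C + 1) + 1 = #B + #C + 1 + 1 by ring,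
      show #B + 1 + #C + 1 = #B + #C + 1 + 1 by ring] at hB hBx ⊢
    nlinarith

lemma card_beforeAfter_pos {B C : Finset α} {e : α} (hBC : Disjoint B C) (heB : e ∉ B)
    (heC : e ∉ C) : 0 < #(beforeAfter B e C) := by
  have h := card_beforeAfter_mul_factorial hBC heB heC
  refine Nat.pos_of_ne_zero fun h0 => ?_
  rw [h0, zero_mul] at h
  exact (by positivity : 0 < (Fintype.card α)! * (#B)! * (#C)!).ne h

theorem card_beforeAfter_insert_div {B C : Finset α} {e x : α} (hBC : Disjoint B C)
    (heB : e ∉ B) (heC : e ∉ C) (hxB : x ∉ B) (hxC : x ∉ C) (hxe : x ≠ e) :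
    (#(beforeAfter (insert x B) e C) : ℝ) / #(beforeAfter B e C) =
      (#B + 1) / (#B + #C + 2) := by
  have hB := card_beforeAfter_mul_factorial hBC heB heC
  have hxB' := card_beforeAfter_mul_factorial (disjoint_insert_left.2 ⟨hxC, hBC⟩)
    (mem_insert.not.2 (not_or.2 ⟨hxe.symm, heB⟩)) heC
  rw [card_insert_of_notMem hxB, show #B + 1 + #C + 1 = #B + #C + 1 + 1 by ring,
    Nat.factorial_succ (#B + #C + 1), Nat.factorial_succ (#B)] at hxB'
  have hpos := card_beforeAfter_pos hBC heB heC
  rw [div_eq_div_iff (by positivity) (by positivity)]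
  have hfac : 0 < (#B + #C + 1)! := Nat.factorial_pos _
  exact_mod_cast Nat.eq_of_mul_eq_mul_right hfac (by nlinarith)

end BeforeAfter

@[simp]
lemma mem_prefixSet {m : ℕ} {σ : Perm (Fin m)} {e x : Fin m} :
    x ∈ prefixSet σ e ↔ σ.symm x < σ.symm e := by
  simp [prefixSet]

@[simp]
lemma mem_downSet {n : ℕ} {T : Finset (Fin (n + 1))} {x : Fin n} :
    x ∈ downSet T ↔ x.castSucc ∈ T := by
  simp [downSet]

lemma map_inter_downSet {n : ℕ} (P : Finset (Fin n)) (T : Finset (Fin (n + 1))) :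
    (P ∩ downSet T).map Fin.castSuccEmb = P.map Fin.castSuccEmb ∩ T := by
  ext y
  simp only [mem_map, mem_inter, mem_downSet, Fin.coe_castSuccEmb]
  constructor
  · rintro ⟨x, ⟨hxP, hxT⟩, rfl⟩
    exact ⟨⟨x, hxP, rfl⟩, hxT⟩
  · rintro ⟨⟨x, hxP, rfl⟩, hxT⟩
    exact ⟨x, ⟨hxP, hxT⟩, rfl⟩

lemma inter_downSet_eq_iff {n : ℕ} {P S : Finset (Fin n)} {T : Finset (Fin (n + 1))} :
    P ∩ downSet T = S ↔ P.map Fin.castSuccEmb ∩ T = S.map Fin.castSuccEmb := by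
  rw [← map_inj (f := Fin.castSuccEmb), map_inter_downSet]

lemma card_prevSet {n : ℕ} (π : Perm (Fin n)) (i : Fin n) : #(prevSet π i) = i := by
  rw [prevSet, card_image_of_injective _ π.injective, filter_gt_eq_Iio, Fin.card_Iio]

lemma apply_notMem_prevSet {n : ℕ} (π : Perm (Fin n)) (i : Fin n) : π i ∉ prevSet π i := by
  simp [prevSet]

lemma filter_inter_prefixSet_eq {m : ℕ} {A S : Finset (Fin m)} {e : Fin m} (hSA : S ⊆ A)
    (heA : e ∉ A) :
    univ.filter (fun σ : Perm (Fin m) => A ∩ prefixSet σ e = S) = beforeAfter S e (A \ S) := by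
  ext σ
  simp only [mem_filter, mem_univ, true_and, mem_beforeAfter, mem_sdiff]
  constructor
  · rintro rfl
    refine ⟨fun x hx => (mem_prefixSet.1 (mem_inter.1 hx).2), fun x ⟨hxA, hxS⟩ => ?_⟩
    have hxe : σ.symm x ≠ σ.symm e := fun h => heA (σ.symm.injective h ▸ hxA)
    exact (lt_or_gt_of_ne hxe).resolve_left fun h => hxS (mem_inter.2 ⟨hxA, mem_prefixSet.2 h⟩)
  · rintro ⟨hS, hAS⟩
    ext x
    simp only [mem_inter, mem_prefixSet]
    exact ⟨fun ⟨hxA, hx⟩ => by_contra fun hxS => (hAS x ⟨hxA, hxS⟩).asymm hx,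
      fun hxS => ⟨hSA hxS, hS x hxS⟩⟩

theorem card_mem_and_inter_prefixSet_div {m : ℕ} {A S : Finset (Fin m)} {e x : Fin m}
    (hSA : S ⊆ A) (heA : e ∉ A) (hxA : x ∉ A) (hxe : x ≠ e) :
    (#(univ.filter fun σ : Perm (Fin m) =>
        x ∈ prefixSet σ e ∧ A ∩ prefixSet σ e = S) : ℝ) /
        #(univ.filter fun σ : Perm (Fin m) => A ∩ prefixSet σ e = S) =
      (#S + 1) / (#A + 2) := by
  have hnum : (univ.filter fun σ : Perm (Fin m) =>
      x ∈ prefixSet σ e ∧ A ∩ prefixSet σ e = S) =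
      beforeAfter (insert x S) e (A \ S) := by
    rw [← filter_beforeAfter_lt, ← filter_inter_prefixSet_eq hSA heA, filter_filter]
    simp only [mem_prefixSet, and_comm]
  rw [hnum, filter_inter_prefixSet_eq hSA heA,
    card_beforeAfter_insert_div disjoint_sdiff (fun h => heA (hSA h))
      (fun h => heA (mem_sdiff.1 h).1) (fun h => hxA (hSA h)) (fun h => hxA (mem_sdiff.1 h).1) hxe,
    ← card_sdiff_add_card_eq_card hSA]
  push_cast
  ring_nf

/-- With `T` the prefix before element `n+1` in a uniformly random permutation of `[n+1]`,
for every `i` and every `S ⊆ π^{i-1}`,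
`Pr[π(i) ∈ T | π^{i-1} ∩ T = S] = (|S| + 1)/(i + 1)`. -/
theorem conditional_membership_prob {n : ℕ} (π : Equiv.Perm (Fin n)) (i : Fin n)
    (S : Finset (Fin n)) (hS : S ⊆ prevSet π i) :
    ((Finset.univ.filter fun σ' : Equiv.Perm (Fin (n + 1)) =>
          π i ∈ downSet (prefixSet σ' (Fin.last n)) ∧
            prevSet π i ∩ downSet (prefixSet σ' (Fin.last n)) = S).card : ℝ) /
        ((Finset.univ.filter fun σ' : Equiv.Perm (Fin (n + 1)) =>
          prevSet π i ∩ downSet (prefixSet σ' (Fin.last n)) = S).card : ℝ) =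
      ((S.card : ℝ) + 1) / ((i.val : ℝ) + 2) := by
  simp only [mem_downSet, inter_downSet_eq_iff]
  rw [card_mem_and_inter_prefixSet_div (map_subset_map.2 hS), card_map, card_map, card_prevSet]
  · simp [Fin.castSucc_ne_last]
  · simpa using apply_notMem_prevSet π i
  · exact Fin.castSucc_ne_last _
end

section
/- Let M = {∅, {1}, {2}, ..., {n}} be the 1-uniform matroid on [n] with n = 1/α an integer, for α ∈ (0, 1/2]. Fix j ∈ [n] and δ ∈ (0, 1/(n + 1/α − 2)], and let D_A be the distribution with Pr[A = ∅] = 1 − δ(n + 1/α − 2), Pr[A = [n]] = δ(1/α − 1), and Pr[A = {i}] = δ for each i ≠ j. Then D_A is α-uncontentious for M. -/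
/-!
The witness is deterministic: keep `j` whenever `j ∈ A`, and otherwise keep `A` itself when it is a
singleton. On the support of `D` this sends `[n]` to `{j}` and `{i}` to `{i}`. Then `j` is selected
whenever it is present, while `i ≠ j` is present with probability `δ(1/α - 1) + δ = δ/α` (in `[n]`
or in `{i}`) and selected with probability `δ` (only in `{i}`), a ratio of exactly `α`.
-/

open Finset

section DeterministicCRS

variable {n : ℕ}

noncomputable def ruleSelProb (D : Finset (Fin n) → ℝ) (φ : Finset (Fin n) → Finset (Fin n))
    (i : Fin n) : ℝ :=
  ∑ A, if i ∈ φ A then D A else 0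

theorem isCRS_ite_eq {M : Finset (Finset (Fin n))} {φ : Finset (Fin n) → Finset (Fin n)}
    (hφ : ∀ A, φ A ⊆ A ∧ φ A ∈ M) : IsCRS M fun ψ => if ψ = φ then 1 else 0 := by
  refine ⟨fun ψ => by positivity, by simp, fun ψ hψ => ?_⟩
  obtain rfl : ψ = φ := by_contra fun h => hψ (if_neg h)
  exact hφ

theorem selProb_ite_eq (D : Finset (Fin n) → ℝ) {φ : Finset (Fin n) → Finset (Fin n)}
    (hφ : ∀ A, φ A ⊆ A) (i : Fin n) :
    selProb D (fun ψ => if ψ = φ then 1 else 0) i = ruleSelProb D φ i := by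
  refine sum_congr rfl fun A _ => ?_
  have hsel : i ∈ φ A ∧ i ∈ A ↔ i ∈ φ A := and_iff_left_of_imp fun h => hφ A h
  rw [Fintype.sum_eq_single φ fun ψ hψ => by simp [hψ]]
  simp [hsel]

theorem uncontentious_of_rule {α : ℝ} {M : Finset (Finset (Fin n))} {D : Finset (Fin n) → ℝ}
    (φ : Finset (Fin n) → Finset (Fin n)) (hφ : ∀ A, φ A ⊆ A ∧ φ A ∈ M)
    (hbal : ∀ i, 0 < prElem D i → α * prElem D i ≤ ruleSelProb D φ i) :
    Uncontentious α M D := by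
  refine ⟨_, isCRS_ite_eq hφ, fun i hi => ?_⟩
  rw [selProb_ite_eq D (fun A => (hφ A).1), le_div_iff₀ hi]
  exact hbal i hi

end DeterministicCRS

section PreferRule

variable {n : ℕ} (j : Fin n)

def preferRule (A : Finset (Fin n)) : Finset (Fin n) :=
  if j ∈ A then {j} else if #A = 1 then A else ∅

theorem preferRule_subset (A : Finset (Fin n)) : preferRule j A ⊆ A := by
  unfold preferRule
  split_ifs with hj
  · exact singleton_subset_iff.2 hj
  · exact Subset.rfl
  · exact empty_subset A

theorem preferRule_mem_uniformOne (A : Finset (Fin n)) :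
    preferRule j A ∈ insert ∅ (univ.image fun i : Fin n => ({i} : Finset (Fin n))) := by
  unfold preferRule
  split_ifs with hj hA
  · simp
  · obtain ⟨k, rfl⟩ := card_eq_one.1 hA
    simp
  · simp

theorem mem_preferRule_self (A : Finset (Fin n)) : j ∈ preferRule j A ↔ j ∈ A := by
  unfold preferRule
  split_ifs with hj hA <;> simp_all

theorem mem_preferRule_of_ne {i : Fin n} (hij : i ≠ j) (A : Finset (Fin n)) :
    i ∈ preferRule j A ↔ A = {i} := by
  unfold preferRule
  split_ifs with hj hA
  · simp only [mem_singleton, hij, false_iff]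
    rintro rfl
    exact hij (mem_singleton.1 hj).symm
  · obtain ⟨k, rfl⟩ := card_eq_one.1 hA
    simp [eq_comm]
  · refine iff_of_false (notMem_empty i) ?_
    rintro rfl
    exact hA (card_singleton i)

theorem ruleSelProb_preferRule_self (D : Finset (Fin n) → ℝ) :
    ruleSelProb D (preferRule j) j = prElem D j := by
  simp only [ruleSelProb, mem_preferRule_self, prElem]

theorem ruleSelProb_preferRule_of_ne (D : Finset (Fin n) → ℝ) {i : Fin n} (hij : i ≠ j) :
    ruleSelProb D (preferRule j) i = D {i} := by
  simp only [ruleSelProb, mem_preferRule_of_ne j hij, Fintype.sum_ite_eq']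

end PreferRule

theorem prElem_eq_of_ne {n : ℕ} {j i : Fin n} {D : Finset (Fin n) → ℝ}
    (hDo : ∀ A : Finset (Fin n), A ≠ ∅ → A ≠ univ → (¬ ∃ i : Fin n, i ≠ j ∧ A = {i}) → D A = 0)
    (hij : i ≠ j) : prElem D i = D univ + D {i} := by
  have huniv : (univ : Finset (Fin n)) ≠ {i} := fun h =>
    hij (mem_singleton.1 (h ▸ mem_univ j)).symm
  refine (Fintype.sum_eq_add _ _ huniv fun A ⟨hAu, hAi⟩ => ?_).trans (by simp)
  refine ite_eq_right_iff.2 fun hiA => hDo A (ne_empty_of_mem hiA) hAu ?_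
  rintro ⟨k, -, rfl⟩
  exact hAi (by rw [mem_singleton.1 hiA])

theorem example_pmin_uncontentious_general {n : ℕ} (α δ : ℝ)
    (hα : α ∈ Set.Ioc (0 : ℝ) (1 / 2)) (j : Fin n)
    (D : Finset (Fin n) → ℝ)
    (hDu : D Finset.univ = δ * (1 / α - 1))
    (hDs : ∀ i : Fin n, i ≠ j → D {i} = δ)
    (hDo : ∀ A : Finset (Fin n), A ≠ ∅ → A ≠ Finset.univ →
      (¬ ∃ i : Fin n, i ≠ j ∧ A = {i}) → D A = 0) :
    Uncontentious α
      (insert (∅ : Finset (Fin n)) (Finset.univ.image fun i : Fin n => ({i} : Finset (Fin n))))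
      D := by
  obtain ⟨hα0, hα2⟩ := hα
  refine uncontentious_of_rule (preferRule j)
    (fun A => ⟨preferRule_subset j A, preferRule_mem_uniformOne j A⟩) fun i hi => ?_
  rcases eq_or_ne i j with rfl | hij
  · rw [ruleSelProb_preferRule_self]
    exact mul_le_of_le_one_left hi.le (by linarith)
  · rw [ruleSelProb_preferRule_of_ne j D hij, prElem_eq_of_ne hDo hij, hDu, hDs i hij]
    exact (by field_simp; ring : α * (δ * (1 / α - 1) + δ) = δ).le

/-- For the 1-uniform matroid on `[n]` with `n = 1/α`, the correlated distribution of
Example `p_min` (mass `1 − δ(n + 1/α − 2)` on `∅`, `δ(1/α − 1)` on `[n]`, and `δ` on each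
singleton `{i}` with `i ≠ j`) is `α`-uncontentious. -/
theorem example_pmin_uncontentious {n : ℕ} (α δ : ℝ)
    (hα : α ∈ Set.Ioc (0 : ℝ) (1 / 2)) (hn : (n : ℝ) = 1 / α) (j : Fin n)
    (hδ : δ ∈ Set.Ioc (0 : ℝ) (1 / ((n : ℝ) + 1 / α - 2)))
    (D : Finset (Fin n) → ℝ)
    (hD0 : D ∅ = 1 - δ * ((n : ℝ) + 1 / α - 2))
    (hDu : D Finset.univ = δ * (1 / α - 1))
    (hDs : ∀ i : Fin n, i ≠ j → D {i} = δ)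
    (hDo : ∀ A : Finset (Fin n), A ≠ ∅ → A ≠ Finset.univ →
      (¬ ∃ i : Fin n, i ≠ j ∧ A = {i}) → D A = 0) :
    Uncontentious α
      (insert (∅ : Finset (Fin n)) (Finset.univ.image fun i : Fin n => ({i} : Finset (Fin n))))
      D :=
  example_pmin_uncontentious_general α δ hα j D hDu hDs hDo
end

section
/- Let M = {∅, {1}, {2}} be the matroid on two elements whose only independent sets are the empty set and the two singletons, and let D_A be the distribution with Pr[A = {1,2}] = 1/2 and Pr[A = ∅] = 1/2. Then D_A is (1/2)-uncontentious for M, yet for each i ∈ {1,2}, Pr_{A∼D_A}[i ∈ span_M(A \ {i}) | i ∈ A] = 1. -/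
/-!
Keeping a uniformly random element `k` if it is active is a contention resolution scheme for
every matroid in which singletons are independent, and it keeps each active element with
probability `1 / n`. On the other hand, `{∅, {0}, {1}}` is the uniform matroid `U_{1,2}`, in
which any nonempty set spans everything; since the active set is either empty or all of `Fin 2`,
an active element is always spanned by the other one.
-/

open Finset

section UniformMatroid

variable {n k : ℕ}

def uniformIndep (n k : ℕ) : Finset (Finset (Fin n)) :=
  univ.filter (·.card ≤ k)

theorem mrank_uniformIndep (X : Finset (Fin n)) : mrank (uniformIndep n k) X = min k X.card := by
  apply le_antisymm
  · refine Finset.sup_le fun Y hY => ?_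
    simp only [mem_filter, mem_powerset, uniformIndep, mem_univ, true_and] at hY
    exact le_min hY.2 (card_le_card hY.1)
  · obtain ⟨Y, hYX, hY⟩ := exists_subset_card_eq (min_le_right k X.card)
    rw [← hY]
    exact le_sup (f := card) (by simp [uniformIndep, hYX, hY])

theorem mem_spanM_uniformIndep {X : Finset (Fin n)} (hX : k ≤ X.card) (i : Fin n) :
    i ∈ spanM (uniformIndep n k) X := by
  have hXi : k ≤ (insert i X).card := hX.trans (card_le_card (subset_insert i X))
  simp [spanM, mrank_uniformIndep, hX, hXi]

end UniformMatroid

section AllOrNothing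

variable {n : ℕ}

theorem sum_ite_mem_and_allOrNothing (p q : ℝ) (i : Fin n) (P : Finset (Fin n) → Prop)
    [DecidablePred P] :
    ∑ A, (if i ∈ A ∧ P A then (if A = univ then p else if A = ∅ then q else 0) else 0) =
      if P univ then p else 0 := by
  rw [sum_eq_single univ]
  · simp
  · intro A _ hA
    by_cases hiA : i ∈ A
    · simp [hA, ne_empty_of_mem hiA]
    · simp [hiA]
  · simp

theorem prElem_allOrNothing (p q : ℝ) (i : Fin n) :
    prElem (fun A => if A = univ then p else if A = ∅ then q else 0) i = p := by
  simpa [prElem] using sum_ite_mem_and_allOrNothing p q i (fun _ => True)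

end AllOrNothing

section RandomSingleton

variable {n : ℕ}

def keepOnly (k : Fin n) (A : Finset (Fin n)) : Finset (Fin n) :=
  A ∩ {k}

/-- The law of `keepOnly k` for `k` uniform on `Fin n`. -/
noncomputable def keepRandomSingleton (n : ℕ) : (Finset (Fin n) → Finset (Fin n)) → ℝ :=
  fun φ => ∑ k : Fin n, if keepOnly k = φ then (n : ℝ)⁻¹ else 0

theorem sum_keepRandomSingleton_mul (g : (Finset (Fin n) → Finset (Fin n)) → ℝ) :
    ∑ φ, keepRandomSingleton n φ * g φ = (n : ℝ)⁻¹ * ∑ k, g (keepOnly k) := by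
  simp only [keepRandomSingleton, sum_mul, ite_mul, zero_mul, mul_sum]
  rw [sum_comm]
  simp

theorem isCRS_keepRandomSingleton [NeZero n] {M : Finset (Finset (Fin n))} (h₀ : ∅ ∈ M)
    (h₁ : ∀ k, {k} ∈ M) : IsCRS M (keepRandomSingleton n) := by
  refine ⟨fun φ => sum_nonneg fun k _ => by positivity, ?_, fun φ hφ A => ?_⟩
  · simpa using sum_keepRandomSingleton_mul (n := n) (fun _ => 1)
  · obtain ⟨k, -, hk⟩ := exists_ne_zero_of_sum_ne_zero hφ
    obtain rfl : keepOnly k = φ := by by_contra h; simp [h] at hk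
    refine ⟨inter_subset_left, ?_⟩
    by_cases hkA : k ∈ A
    · simpa [keepOnly, inter_singleton_of_mem hkA] using h₁ k
    · simpa [keepOnly, inter_singleton_of_notMem hkA] using h₀

theorem selProb_keepRandomSingleton (D : Finset (Fin n) → ℝ) (i : Fin n) :
    selProb D (keepRandomSingleton n) i = (n : ℝ)⁻¹ * prElem D i := by
  have h : ∀ A, (∑ φ, if i ∈ φ A ∧ i ∈ A then D A * keepRandomSingleton n φ else 0) =
      (n : ℝ)⁻¹ * if i ∈ A then D A else 0 := fun A => by
    have hcomm : ∀ φ : Finset (Fin n) → Finset (Fin n),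
        (if i ∈ φ A ∧ i ∈ A then D A * keepRandomSingleton n φ else 0) =
          keepRandomSingleton n φ * if i ∈ φ A ∧ i ∈ A then D A else 0 := fun φ => by
      split_ifs <;> ring
    simp only [hcomm, sum_keepRandomSingleton_mul]
    have hmem : ∀ k, (i ∈ keepOnly k A ∧ i ∈ A) ↔ (i = k ∧ i ∈ A) := fun k => by
      rw [keepOnly, mem_inter, mem_singleton]
      tauto
    simp only [hmem, ite_and, sum_ite_eq, mem_univ, if_true]
  simp only [selProb, prElem, h, mul_sum]

theorem uncontentious_inv_of_singleton_mem [NeZero n] {M : Finset (Finset (Fin n))} (h₀ : ∅ ∈ M)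
    (h₁ : ∀ k, {k} ∈ M) (D : Finset (Fin n) → ℝ) : Uncontentious (n : ℝ)⁻¹ M D := by
  refine ⟨keepRandomSingleton n, isCRS_keepRandomSingleton h₀ h₁, fun i hi => ?_⟩
  rw [selProb_keepRandomSingleton, mul_div_cancel_right₀ _ hi.ne']

end RandomSingleton

/-- For the matroid `{∅, {1}, {2}}` on two elements with `Pr[A = {1,2}] = Pr[A = ∅] = 1/2`:
the distribution is `(1/2)`-uncontentious, yet each element is spanned by the rest of the
active set with conditional probability `1`. -/
theorem two_element_example :
    Uncontentious (1 / 2) ({∅, {0}, {1}} : Finset (Finset (Fin 2)))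
      (fun A => if A = Finset.univ then (1 : ℝ) / 2 else if A = ∅ then 1 / 2 else 0) ∧
    ∀ i : Fin 2,
      (∑ A : Finset (Fin 2),
          if i ∈ A ∧ i ∈ spanM ({∅, {0}, {1}} : Finset (Finset (Fin 2))) (A.erase i) then
            (if A = Finset.univ then (1 : ℝ) / 2 else if A = ∅ then 1 / 2 else 0)
          else 0) /
        prElem (fun A => if A = Finset.univ then (1 : ℝ) / 2 else if A = ∅ then 1 / 2 else 0)
          i = 1 := by
  constructor
  · have h := uncontentious_inv_of_singleton_mem (n := 2) (M := {∅, {0}, {1}}) (by simp)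
      (fun k => by fin_cases k <;> simp)
      (fun A => if A = Finset.univ then (1 : ℝ) / 2 else if A = ∅ then 1 / 2 else 0)
    rwa [Nat.cast_ofNat, ← one_div] at h
  · have hM : ({∅, {0}, {1}} : Finset (Finset (Fin 2))) = uniformIndep 2 1 := by decide
    intro i
    have hspan : i ∈ spanM ({∅, {0}, {1}} : Finset (Finset (Fin 2))) (univ.erase i) :=
      hM ▸ mem_spanM_uniformIndep (by simp) i
    rw [sum_ite_mem_and_allOrNothing, prElem_allOrNothing, if_pos hspan]
    norm_num
end
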